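/- arXiv:2103.02490 — 5 statements merged into one kernel-verified Lean document; each statement's English description precedes it below -/
import Mathlib

section
/- Fix a prime p. Let Λ be a ℤ_p-lattice in ℚ_p², and let Λ' := Λ \ p·Λ be its set of primitive vectors. Then Λ' is a compact open subset of X, and there exist finitely many pairwise disjoint compact open subsets U₁, …, U_t of X whose union is X₀, and integers m₁, …, m_t, such that Λ' is the disjoint union of the sets p^{m₁}·U₁, …, p^{m_t}·U_t. -/
/-!
A basis of `Λ` gives a continuous linear automorphism `L` of `ℚ_p²` with `Λ = L(ℤ_p²)`. Nonzero
vectors have norms in `p^ℤ`, so `Λ \ pΛ = L(X₀) = {v | ‖L⁻¹ v‖ = 1}`. Cutting the unit sphere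
`X₀` according to the value `p^k` of `‖L⁻¹ u‖` gives compact open pieces `U_k`, and `p^k·U_k` is
the part of `Λ \ pΛ` on the sphere of radius `p^(-k)`. The `U_k` form a disjoint open cover of the
compact set `X₀`, so only finitely many of them are nonempty.
-/

/-- `X := (ℚ_p × ℚ_p) \ {(0,0)}`. -/
def X (p : ℕ) [Fact p.Prime] : Set (ℚ_[p] × ℚ_[p]) := {v | v ≠ 0}

/-- The set `X₀` of primitive vectors of `ℤ_p²`. -/
def X0 (p : ℕ) [Fact p.Prime] : Set (ℚ_[p] × ℚ_[p]) :=
  {v | ‖v.1‖ ≤ 1 ∧ ‖v.2‖ ≤ 1 ∧ (‖v.1‖ = 1 ∨ ‖v.2‖ = 1)}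

/-- `p^j·U := {(p^j x, p^j y) : (x, y) ∈ U}`. -/
def pScale (p : ℕ) [Fact p.Prime] (j : ℤ) (U : Set (ℚ_[p] × ℚ_[p])) : Set (ℚ_[p] × ℚ_[p]) :=
  (fun v => ((p : ℚ_[p]) ^ j * v.1, (p : ℚ_[p]) ^ j * v.2)) '' U

/-- A `ℤ_p`-lattice in `ℚ_p²`: the `ℤ_p`-submodule `ℤ_p·v + ℤ_p·w` for some
`ℚ_p`-basis `(v, w)` of `ℚ_p × ℚ_p` (viewed as a set; `ℤ_p ⊆ ℚ_p` is the set of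
elements of norm at most 1). -/
def IsLattice (p : ℕ) [Fact p.Prime] (Λ : Set (ℚ_[p] × ℚ_[p])) : Prop :=
  ∃ b : Module.Basis (Fin 2) ℚ_[p] (ℚ_[p] × ℚ_[p]),
    Λ = {z | ∃ a c : ℚ_[p], ‖a‖ ≤ 1 ∧ ‖c‖ ≤ 1 ∧ z = a • b 0 + c • b 1}


open Metric Set Pointwise

instance Prod.instIsUltrametricDist {α β : Type*} [PseudoMetricSpace α] [PseudoMetricSpace β]
    [IsUltrametricDist α] [IsUltrametricDist β] : IsUltrametricDist (α × β) where
  dist_triangle_max x y z := by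
    simp only [Prod.dist_eq]
    exact max_le
      ((dist_triangle_max _ y.1 _).trans (max_le_max (le_max_left _ _) (le_max_left _ _)))
      ((dist_triangle_max _ y.2 _).trans (max_le_max (le_max_right _ _) (le_max_right _ _)))

theorem IsCompact.finite_setOf_nonempty {α ι : Type*} [TopologicalSpace α] {K : Set α}
    (hK : IsCompact K) {U : ι → Set α} (hU : ∀ i, IsOpen (U i))
    (hdisj : Pairwise fun i j => Disjoint (U i) (U j)) (hcover : K ⊆ ⋃ i, U i)
    (hsub : ∀ i, U i ⊆ K) :
    {i | (U i).Nonempty}.Finite := by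
  obtain ⟨s, hs⟩ := hK.elim_finite_subcover U hU hcover
  refine s.finite_toSet.subset fun i ⟨x, hx⟩ => ?_
  obtain ⟨j, hj, hxj⟩ := mem_iUnion₂.mp (hs (hsub i hx))
  by_contra hi
  exact disjoint_left.mp (hdisj (ne_of_mem_of_not_mem hj hi).symm) hx hxj

theorem Set.iUnion_comp_of_nonempty_mem_range {α ι κ : Type*} {m : κ → ι} {W : ι → Set α}
    (h : ∀ i, (W i).Nonempty → i ∈ range m) : ⋃ k, W (m k) = ⋃ i, W i := by
  refine (iUnion_subset fun k => subset_iUnion W (m k)).antisymm (iUnion_subset fun i x hx => ?_)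
  obtain ⟨k, rfl⟩ := h i ⟨x, hx⟩
  exact mem_iUnion_of_mem k hx

section Padic

variable {p : ℕ} [Fact p.Prime]

theorem Padic.norm_natCast_zpow (j : ℤ) : ‖(p : ℚ_[p]) ^ j‖ = (p : ℝ) ^ (-j) := by
  rw [norm_zpow, Padic.norm_p, inv_zpow, zpow_neg]

theorem exists_norm_eq_zpow {v : ℚ_[p] × ℚ_[p]} (hv : v ≠ 0) : ∃ k : ℤ, ‖v‖ = (p : ℝ) ^ k := by
  obtain ⟨x, hvx⟩ : ∃ x : ℚ_[p], ‖v‖ = ‖x‖ := by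
    rcases max_choice ‖v.1‖ ‖v.2‖ with h | h
    exacts [⟨v.1, h⟩, ⟨v.2, h⟩]
  have hx0 : x ≠ 0 := by
    rintro rfl
    exact hv (norm_eq_zero.mp (hvx.trans norm_zero))
  exact ⟨-x.valuation, hvx.trans (Padic.norm_eq_zpow_neg_valuation hx0)⟩

theorem closedBall_diff_closedBall_inv_eq_sphere :
    closedBall (0 : ℚ_[p] × ℚ_[p]) 1 \ closedBall 0 (p : ℝ)⁻¹ = sphere 0 1 := by
  have hp : (1 : ℝ) < p := mod_cast (Fact.out : p.Prime).one_lt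
  ext v
  simp only [mem_sdiff, mem_closedBall, mem_sphere, dist_zero_right, not_le]
  refine ⟨fun ⟨hle, hlt⟩ => ?_, fun h => ⟨h.le, h ▸ inv_lt_one_of_one_lt₀ hp⟩⟩
  obtain ⟨k, hk⟩ := exists_norm_eq_zpow (norm_pos_iff.mp (lt_trans (by positivity) hlt))
  rw [hk, ← zpow_neg_one] at hlt
  rw [hk, ← zpow_zero (p : ℝ)] at hle ⊢
  rw [zpow_lt_zpow_iff_right₀ hp] at hlt
  rw [zpow_le_zpow_iff_right₀ hp] at hle
  rw [show k = 0 by omega]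

theorem X0_eq_sphere : X0 p = sphere 0 1 := by
  ext v
  simp only [X0, mem_ofPred_eq, mem_sphere, dist_zero_right, Prod.norm_def]
  constructor
  · rintro ⟨h1, h2, h | h⟩
    exacts [le_antisymm (max_le h1 h2) (h ▸ le_max_left _ _),
      le_antisymm (max_le h1 h2) (h ▸ le_max_right _ _)]
  · intro h
    refine ⟨h ▸ le_max_left _ _, h ▸ le_max_right _ _, ?_⟩
    rcases max_choice ‖v.1‖ ‖v.2‖ with h' | h'
    exacts [.inl (h'.symm.trans h), .inr (h'.symm.trans h)]

theorem pScale_eq_smul (j : ℤ) (U : Set (ℚ_[p] × ℚ_[p])) :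
    pScale p j U = ((p : ℚ_[p]) ^ j) • U :=
  rfl

theorem IsLattice.exists_eq_image_closedBall {Λ : Set (ℚ_[p] × ℚ_[p])} (hΛ : IsLattice p Λ) :
    ∃ L : (ℚ_[p] × ℚ_[p]) ≃L[ℚ_[p]] (ℚ_[p] × ℚ_[p]), Λ = L '' closedBall 0 1 := by
  obtain ⟨b, rfl⟩ := hΛ
  let e := Module.Basis.finTwoProd ℚ_[p]
  let L := (e.equiv b (Equiv.refl _)).toContinuousLinearEquiv
  have hL (a c : ℚ_[p]) : L (a, c) = a • b 0 + c • b 1 := by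
    have hac : (a, c) = a • e 0 + c • e 1 := by simp [e]
    rw [hac, map_add, map_smul, map_smul]
    simp only [L, LinearEquiv.coe_toContinuousLinearEquiv', Module.Basis.equiv_apply,
      Equiv.refl_apply]
  refine ⟨L, ?_⟩
  ext z
  simp only [mem_ofPred_eq, mem_image, mem_closedBall, dist_zero_right, norm_prod_le_iff,
    Prod.exists, hL]
  constructor
  · rintro ⟨a, c, ha, hc, rfl⟩
    exact ⟨a, c, ⟨ha, hc⟩, rfl⟩
  · rintro ⟨a, c, ⟨ha, hc⟩, rfl⟩
    exact ⟨a, c, ha, hc, rfl⟩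

theorem image_closedBall_diff_pScale (L : (ℚ_[p] × ℚ_[p]) ≃L[ℚ_[p]] (ℚ_[p] × ℚ_[p])) :
    L '' closedBall 0 1 \ pScale p 1 (L '' closedBall 0 1) = L '' sphere 0 1 := by
  rw [pScale_eq_smul, ← image_smul_set, _root_.smul_closedBall _ _ zero_le_one, smul_zero,
    Padic.norm_natCast_zpow, mul_one, zpow_neg_one, ← image_sdiff L.injective,
    closedBall_diff_closedBall_inv_eq_sphere]

section Fiber

variable (g : (ℚ_[p] × ℚ_[p]) ≃L[ℚ_[p]] (ℚ_[p] × ℚ_[p]))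

def primitiveFiber (k : ℤ) : Set (ℚ_[p] × ℚ_[p]) :=
  sphere 0 1 ∩ g ⁻¹' sphere 0 ((p : ℝ) ^ k)

theorem isCompact_primitiveFiber (k : ℤ) : IsCompact (primitiveFiber g k) :=
  (isCompact_sphere 0 1).inter_right (isClosed_sphere.preimage g.continuous)

theorem isOpen_primitiveFiber (k : ℤ) : IsOpen (primitiveFiber g k) := by
  have hpk : (p : ℝ) ^ k ≠ 0 := zpow_ne_zero k (mod_cast (Fact.out : p.Prime).ne_zero)
  exact (IsUltrametricDist.isOpen_sphere 0 one_ne_zero).inter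
    ((IsUltrametricDist.isOpen_sphere 0 hpk).preimage g.continuous)

theorem pairwise_disjoint_primitiveFiber :
    Pairwise fun k l => Disjoint (primitiveFiber g k) (primitiveFiber g l) := by
  have hp : (1 : ℝ) < p := mod_cast (Fact.out : p.Prime).one_lt
  intro k l hkl
  refine disjoint_left.mpr fun u ⟨_, hk⟩ ⟨_, hl⟩ => hkl ?_
  rw [mem_preimage, mem_sphere_zero_iff_norm] at hk hl
  exact (zpow_right_inj₀ (by positivity) hp.ne').mp (hk.symm.trans hl)

theorem iUnion_primitiveFiber : ⋃ k, primitiveFiber g k = sphere 0 1 := by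
  refine (iUnion_subset fun k => inter_subset_left).antisymm fun u hu => ?_
  have hgu : g u ≠ 0 := g.map_ne_zero_iff.mpr (ne_zero_of_mem_unit_sphere ⟨u, hu⟩)
  obtain ⟨k, hk⟩ := exists_norm_eq_zpow hgu
  exact mem_iUnion_of_mem k ⟨hu, mem_sphere_zero_iff_norm.mpr hk⟩

theorem pScale_primitiveFiber (k : ℤ) :
    pScale p k (primitiveFiber g k) = g ⁻¹' sphere 0 1 ∩ sphere 0 ((p : ℝ) ^ (-k)) := by
  have hp : p ≠ 0 := (Fact.out : p.Prime).ne_zero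
  have hpk : (p : ℝ) ^ k ≠ 0 := zpow_ne_zero k (mod_cast hp)
  ext v
  rw [pScale_eq_smul, mem_smul_set_iff_inv_smul_mem₀ (zpow_ne_zero k (mod_cast hp))]
  simp only [primitiveFiber, mem_inter_iff, mem_preimage, mem_sphere_zero_iff_norm, map_smul,
    norm_smul, norm_inv, Padic.norm_natCast_zpow]
  rw [zpow_neg, inv_inv, mul_eq_left₀ hpk, mul_comm, mul_eq_one_iff_eq_inv₀ hpk, and_comm]

theorem pairwise_disjoint_pScale_primitiveFiber :
    Pairwise fun k l =>
      Disjoint (pScale p k (primitiveFiber g k)) (pScale p l (primitiveFiber g l)) := by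
  have hp : (1 : ℝ) < p := mod_cast (Fact.out : p.Prime).one_lt
  intro k l hkl
  simp only [pScale_primitiveFiber]
  refine disjoint_left.mpr fun v ⟨_, hk⟩ ⟨_, hl⟩ => hkl ?_
  rw [mem_sphere_zero_iff_norm] at hk hl
  exact neg_inj.mp ((zpow_right_inj₀ (by positivity) hp.ne').mp (hk.symm.trans hl))

theorem iUnion_pScale_primitiveFiber :
    ⋃ k, pScale p k (primitiveFiber g k) = g ⁻¹' sphere 0 1 := by
  simp only [pScale_primitiveFiber, ← inter_iUnion]
  refine inter_eq_left.mpr fun v hv => ?_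
  have hv0 : v ≠ 0 := by
    rintro rfl
    simp at hv
  obtain ⟨k, hk⟩ := exists_norm_eq_zpow hv0
  exact mem_iUnion_of_mem (-k) (mem_sphere_zero_iff_norm.mpr (by rwa [neg_neg]))

end Fiber

end Padic

/-- If `Λ` is a `ℤ_p`-lattice in `ℚ_p²` and `Λ' := Λ \ pΛ` is its set of primitive
vectors, then `Λ'` is a compact open subset of `X`, and there are finitely many
pairwise disjoint compact open `U₁, …, U_t ⊆ X` with union `X₀` and integers
`m₁, …, m_t` such that `Λ'` is the disjoint union of `p^{m₁}·U₁, …, p^{m_t}·U_t`. -/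
theorem stmt1 (p : ℕ) [Fact p.Prime] (Λ : Set (ℚ_[p] × ℚ_[p])) (hΛ : IsLattice p Λ) :
    IsCompact (Λ \ pScale p 1 Λ) ∧ IsOpen (Λ \ pScale p 1 Λ) ∧ (Λ \ pScale p 1 Λ) ⊆ X p ∧
    ∃ (t : ℕ) (U : Fin t → Set (ℚ_[p] × ℚ_[p])) (m : Fin t → ℤ),
      (∀ i, IsCompact (U i) ∧ IsOpen (U i) ∧ U i ⊆ X p) ∧
      (Pairwise fun i k => Disjoint (U i) (U k)) ∧
      (⋃ i, U i) = X0 p ∧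
      (Pairwise fun i k => Disjoint (pScale p (m i) (U i)) (pScale p (m k) (U k))) ∧
      (Λ \ pScale p 1 Λ) = ⋃ i, pScale p (m i) (U i) := by
  obtain ⟨L, rfl⟩ := hΛ.exists_eq_image_closedBall
  rw [image_closedBall_diff_pScale, L.image_eq_preimage_symm]
  set g := L.symm
  obtain ⟨t, m, hm, hrange⟩ := ((isCompact_sphere 0 1).finite_setOf_nonempty
    (isOpen_primitiveFiber g) (pairwise_disjoint_primitiveFiber g) (iUnion_primitiveFiber g).ge
    fun k => inter_subset_left).fin_param
  have hcover : ∀ k, (primitiveFiber g k).Nonempty → k ∈ range m := fun k hk => hrange ▸ hk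
  refine ⟨g.toHomeomorph.isCompact_preimage.mpr (isCompact_sphere 0 1),
    (IsUltrametricDist.isOpen_sphere 0 one_ne_zero).preimage g.continuous,
    fun v hv h0 => by simp [h0] at hv,
    t, fun i => primitiveFiber g (m i), m,
    fun i => ⟨isCompact_primitiveFiber g _, isOpen_primitiveFiber g _,
      fun v hv h0 => by simp [h0, primitiveFiber] at hv⟩,
    (pairwise_disjoint_primitiveFiber g).comp_of_injective hm, ?_,
    (pairwise_disjoint_pScale_primitiveFiber g).comp_of_injective hm, ?_⟩
  · rw [X0_eq_sphere, iUnion_comp_of_nonempty_mem_range hcover, iUnion_primitiveFiber]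
  · rw [iUnion_comp_of_nonempty_mem_range (W := fun k => pScale p k (primitiveFiber g k))
      fun k hk => hcover k hk.of_image, iUnion_pScale_primitiveFiber]
end

section
/- Fix a prime p. Let G be the subgroup of GL₂(ℚ_p) generated by SL₂(ℤ) and the matrix T = diag(p, 1), acting on row vectors in ℚ_p × ℚ_p on the right (so U·γ := {v·γ : v ∈ U}). Let A be an abelian group equipped with a right action of G by additive automorphisms, and let μ be a p-invariant A-valued distribution on X. Suppose that: (i) μ(U·γ) = μ(U)·γ for every compact open subset U of X and every γ ∈ SL₂(ℤ); and (ii) μ(B·T) = μ(B)·T for every set B = v + pⁿ·(ℤ_p × ℤ_p) with n ≥ 1 and v a primitive vector of ℤ_p². Then μ(U·γ) = μ(U)·γ for every compact open subset U of X and every γ ∈ G. -/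
open Matrix

/-- `X := ℚ_p² \ {0}`, with vectors written as row vectors `Fin 2 → ℚ_p`. -/
def Xv (p : ℕ) [Fact p.Prime] : Set (Fin 2 → ℚ_[p]) := {v | v ≠ 0}

/-- A primitive vector of `ℤ_p²`. -/
def IsPrimitiveVec (p : ℕ) [Fact p.Prime] (v : Fin 2 → ℚ_[p]) : Prop :=
  (∀ i, ‖v i‖ ≤ 1) ∧ ∃ i, ‖v i‖ = 1

/-- The ball `v + pⁿ·(ℤ_p × ℤ_p)`. -/
def ballV (p : ℕ) [Fact p.Prime] (v : Fin 2 → ℚ_[p]) (n : ℕ) : Set (Fin 2 → ℚ_[p]) :=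
  {w | ∀ i, ‖w i - v i‖ ≤ (p : ℝ) ^ (-(n : ℤ))}

/-- `p·U`. -/
def pScaleV (p : ℕ) [Fact p.Prime] (U : Set (Fin 2 → ℚ_[p])) : Set (Fin 2 → ℚ_[p]) :=
  (fun v => (p : ℚ_[p]) • v) '' U

/-- A compact open subset of `X`. -/
def IsCompactOpenV (p : ℕ) [Fact p.Prime] (U : Set (Fin 2 → ℚ_[p])) : Prop :=
  IsCompact U ∧ IsOpen U ∧ U ⊆ Xv p

/-- `U·γ := {v·γ : v ∈ U}` (right multiplication of row vectors). -/
def vmulSet (p : ℕ) [Fact p.Prime] (γ : GL (Fin 2) ℚ_[p]) (U : Set (Fin 2 → ℚ_[p])) :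
    Set (Fin 2 → ℚ_[p]) :=
  (fun v => Matrix.vecMul v (γ : Matrix (Fin 2) (Fin 2) ℚ_[p])) '' U

/-- The image of `SL₂(ℤ)` in `GL₂(ℚ_p)`. -/
def SLZset (p : ℕ) [Fact p.Prime] : Set (GL (Fin 2) ℚ_[p]) :=
  Set.range fun g : Matrix.SpecialLinearGroup (Fin 2) ℤ =>
    Matrix.SpecialLinearGroup.toGL
      (Matrix.SpecialLinearGroup.map (Int.castRingHom ℚ_[p]) g)

/-- The matrix `T = diag(p, 1)` as an element of `GL₂(ℚ_p)`. -/
noncomputable def Tmat (p : ℕ) [Fact p.Prime] : GL (Fin 2) ℚ_[p] :=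
  Matrix.GeneralLinearGroup.mkOfDetNeZero (Matrix.diagonal ![(p : ℚ_[p]), 1]) (by
    have hp : (p : ℚ_[p]) ≠ 0 :=
      Nat.cast_ne_zero.mpr (Fact.out (p := p.Prime)).ne_zero
    simp [Matrix.det_diagonal, Fin.prod_univ_two, hp])

/-- `G`: the subgroup of `GL₂(ℚ_p)` generated by `SL₂(ℤ)` and `T = diag(p, 1)`. -/
noncomputable def Ggrp (p : ℕ) [Fact p.Prime] : Subgroup (GL (Fin 2) ℚ_[p]) :=
  Subgroup.closure (SLZset p ∪ {Tmat p})

/-! If `μ` is `γ`-equivariant and `γ'`-equivariant on all compact opens, it is so for `γγ'` and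
`γ⁻¹`; hence only `T` needs work, i.e. `T`-equivariance has to be extended from the balls
`v + pⁿℤ_p²` to all compact opens. By compactness and the ultrametric inequality, a compact open
`U ⊆ X` is a finite disjoint union of closed balls of one radius `p^{-m}`, none containing `0`, and
multiplying by a power of `p` turns each of them into a ball `v + pⁿℤ_p²` with `v` primitive and
`n ≥ 1`. Both `U ↦ μ(U·T)` and `U ↦ μ(U)·T` are additive and invariant under scaling by `p`
(which commutes with `T`), so they agree on every compact open. -/

open Metric Pointwise

section FinitelyAdditive

variable {α A : Type*} [AddCancelCommMonoid A] {P : Set α → Prop} {ν : Set α → A}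

lemma map_empty_of_additive (hP : P ∅)
    (hν : ∀ U V, P U → P V → Disjoint U V → ν (U ∪ V) = ν U + ν V) : ν ∅ = 0 := by
  have h := hν ∅ ∅ hP hP disjoint_bot_left
  rw [Set.union_empty] at h
  exact left_eq_add.1 h

lemma map_biUnion_of_additive (hP₀ : P ∅) (hP : ∀ U V, P U → P V → P (U ∪ V))
    (hν : ∀ U V, P U → P V → Disjoint U V → ν (U ∪ V) = ν U + ν V)
    {F : Finset (Set α)} (hF : ∀ B ∈ F, P B) (hdisj : (F : Set (Set α)).PairwiseDisjoint id) :
    ν (⋃ B ∈ F, B) = ∑ B ∈ F, ν B := by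
  classical
  induction F using Finset.induction_on with
  | empty => simpa using map_empty_of_additive hP₀ hν
  | insert B F hB ih =>
    rw [Finset.coe_insert, Set.pairwiseDisjoint_insert] at hdisj
    have hFP : P (⋃ C ∈ F, C) := by
      rw [← Finset.sup_set_eq_biUnion]
      exact Finset.sup_mem {U | P U} hP₀ (fun U hU V hV => hP U V hU hV) F id fun C hC => hF C (Finset.mem_insert_of_mem hC)
    have hBF : Disjoint B (⋃ C ∈ F, C) :=
      Set.disjoint_iUnion₂_right.2 fun C hC => hdisj.2 C hC (ne_of_mem_of_not_mem hC hB).symm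
    rw [Finset.set_biUnion_insert, Finset.sum_insert hB,
      hν _ _ (hF B (Finset.mem_insert_self B F)) hFP hBF,
      ih (fun C hC => hF C (Finset.mem_insert_of_mem hC)) hdisj.1]

end FinitelyAdditive

lemma exists_norm_eq_norm_apply {ι E : Type*} [Fintype ι] [Nonempty ι] [SeminormedAddCommGroup E]
    (c : ι → E) : ∃ i, ‖c‖ = ‖c i‖ := by
  obtain ⟨i, -, hi⟩ := Finset.univ.exists_mem_eq_sup Finset.univ_nonempty fun b => ‖c b‖₊
  exact ⟨i, by rw [Pi.norm_def, hi, coe_nnnorm]⟩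

lemma IsCompact.exists_finset_closedBall_partition {X : Type*} [PseudoMetricSpace X]
    [IsUltrametricDist X] {U : Set X} (hU : IsCompact U) {r : ℝ} (hr : 0 < r)
    (hUr : ∀ w ∈ U, closedBall w r ⊆ U) :
    ∃ F : Finset (Set X), (F : Set (Set X)).PairwiseDisjoint id ∧ ⋃ B ∈ F, B = U ∧
      ∀ B ∈ F, ∃ w ∈ U, B = closedBall w r := by
  classical
  obtain ⟨t, htU, hcov⟩ := hU.elim_nhds_subcover (closedBall · r) fun w _ => closedBall_mem_nhds w hr
  refine ⟨t.image (closedBall · r), ?_, ?_, ?_⟩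
  · rintro _ h₁ _ h₂ hne
    simp only [Finset.coe_image, Set.mem_image, Finset.mem_coe] at h₁ h₂
    obtain ⟨w₁, -, rfl⟩ := h₁
    obtain ⟨w₂, -, rfl⟩ := h₂
    exact (IsUltrametricDist.closedBall_eq_or_disjoint w₁ w₂ r).resolve_left hne
  · rw [Finset.set_biUnion_finset_image]
    exact (Set.iUnion₂_subset fun w hw => hUr w (htU w hw)).antisymm hcov
  · intro B hB
    obtain ⟨w, hw, rfl⟩ := Finset.mem_image.1 hB
    exact ⟨w, htU w hw, rfl⟩

def Matrix.GeneralLinearGroup.vecMulHomeomorph {n R : Type*} [Fintype n] [DecidableEq n]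
    [Semiring R] [TopologicalSpace R] [IsTopologicalSemiring R] (γ : GL n R) :
    (n → R) ≃ₜ (n → R) where
  toFun v := v ᵥ* (γ : Matrix n n R)
  invFun v := v ᵥ* ((γ⁻¹ : GL n R) : Matrix n n R)
  left_inv v := by simp [vecMul_vecMul]
  right_inv v := by simp [vecMul_vecMul]
  continuous_toFun := continuous_id.matrix_vecMul continuous_const
  continuous_invFun := continuous_id.matrix_vecMul continuous_const

section Padic

variable {p : ℕ} [Fact p.Prime]

lemma one_lt_prime_cast : (1 : ℝ) < p := by exact_mod_cast (Fact.out : p.Prime).one_lt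

lemma prime_cast_pos : (0 : ℝ) < p := by exact_mod_cast (Fact.out : p.Prime).pos

lemma zpow_prime_cast_pos (m : ℤ) : (0 : ℝ) < (p : ℝ) ^ m := zpow_pos prime_cast_pos m

lemma prime_cast_ne_zero : (p : ℚ_[p]) ≠ 0 := Nat.cast_ne_zero.2 (Fact.out : p.Prime).ne_zero

lemma Padic.exists_pi_norm_eq_zpow {ι : Type*} [Fintype ι] {c : ι → ℚ_[p]} (hc : c ≠ 0) :
    ∃ j : ℤ, ‖c‖ = (p : ℝ) ^ (-j) := by
  have : Nonempty ι := ⟨(Function.ne_iff.1 hc).choose⟩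
  obtain ⟨i, hi⟩ := exists_norm_eq_norm_apply c
  have hci : c i ≠ 0 := fun h => hc (norm_eq_zero.1 (by rw [hi, h, norm_zero]))
  exact ⟨(c i).valuation, hi.trans (Padic.norm_eq_zpow_neg_valuation hci)⟩

lemma isPrimitiveVec_iff_norm_eq_one {v : Fin 2 → ℚ_[p]} : IsPrimitiveVec p v ↔ ‖v‖ = 1 := by
  constructor
  · rintro ⟨hle, i, hi⟩
    exact le_antisymm ((pi_norm_le_iff_of_nonneg zero_le_one).2 hle) (hi ▸ norm_le_pi_norm v i)
  · intro hv
    obtain ⟨i, hi⟩ := exists_norm_eq_norm_apply v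
    exact ⟨fun i => hv ▸ norm_le_pi_norm v i, i, hi.symm.trans hv⟩

lemma ballV_eq_closedBall (v : Fin 2 → ℚ_[p]) (n : ℕ) :
    ballV p v n = closedBall v ((p : ℝ) ^ (-(n : ℤ))) := by
  ext w
  rw [mem_closedBall, dist_pi_le_iff (zpow_prime_cast_pos _).le]
  simp only [dist_eq_norm]
  rfl

lemma isCompactOpenV_empty : IsCompactOpenV p ∅ :=
  ⟨isCompact_empty, isOpen_empty, Set.empty_subset _⟩

lemma IsCompactOpenV.union {U V : Set (Fin 2 → ℚ_[p])} (hU : IsCompactOpenV p U)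
    (hV : IsCompactOpenV p V) : IsCompactOpenV p (U ∪ V) :=
  ⟨hU.1.union hV.1, hU.2.1.union hV.2.1, Set.union_subset hU.2.2 hV.2.2⟩

lemma IsCompactOpenV.image_homeomorph {U : Set (Fin 2 → ℚ_[p])} (hU : IsCompactOpenV p U)
    (e : (Fin 2 → ℚ_[p]) ≃ₜ (Fin 2 → ℚ_[p])) (he : e 0 = 0) : IsCompactOpenV p (e '' U) :=
  ⟨hU.1.image e.continuous, e.isOpenMap U hU.2.1, by
    rintro _ ⟨v, hv, rfl⟩ h
    exact hU.2.2 hv (e.injective (h.trans he.symm))⟩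

lemma IsCompactOpenV.smul {U : Set (Fin 2 → ℚ_[p])} (hU : IsCompactOpenV p U) {c : ℚ_[p]}
    (hc : c ≠ 0) : IsCompactOpenV p (c • U) :=
  hU.image_homeomorph (Homeomorph.smulOfNeZero c hc) (smul_zero c)

lemma IsCompactOpenV.vmulSet {U : Set (Fin 2 → ℚ_[p])} (hU : IsCompactOpenV p U)
    (γ : GL (Fin 2) ℚ_[p]) : IsCompactOpenV p (vmulSet p γ U) :=
  hU.image_homeomorph γ.vecMulHomeomorph (zero_vecMul (γ : Matrix (Fin 2) (Fin 2) ℚ_[p]))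

lemma isCompactOpenV_closedBall {c : Fin 2 → ℚ_[p]} {r : ℝ} (hr₀ : 0 < r) (hr : r < ‖c‖) :
    IsCompactOpenV p (closedBall c r) := by
  refine ⟨isCompact_closedBall c r, IsUltrametricDist.isOpen_closedBall c hr₀.ne', ?_⟩
  rintro w hw (rfl : w = 0)
  rw [mem_closedBall, dist_zero_left] at hw
  exact hw.not_gt hr

lemma IsPrimitiveVec.isCompactOpenV_ballV {v : Fin 2 → ℚ_[p]} (hv : IsPrimitiveVec p v) {n : ℕ}
    (hn : 1 ≤ n) : IsCompactOpenV p (ballV p v n) := by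
  rw [ballV_eq_closedBall]
  refine isCompactOpenV_closedBall (zpow_prime_cast_pos _) ?_
  rw [isPrimitiveVec_iff_norm_eq_one.1 hv]
  exact zpow_lt_one_of_neg₀ one_lt_prime_cast (by omega)

lemma vmulSet_one (U : Set (Fin 2 → ℚ_[p])) : vmulSet p 1 U = U := by
  simp [vmulSet]

lemma vmulSet_mul (g h : GL (Fin 2) ℚ_[p]) (U : Set (Fin 2 → ℚ_[p])) :
    vmulSet p (g * h) U = vmulSet p h (vmulSet p g U) := by
  simp only [vmulSet, Set.image_image, Units.val_mul, vecMul_vecMul]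

lemma vmulSet_smul (g : GL (Fin 2) ℚ_[p]) (c : ℚ_[p]) (U : Set (Fin 2 → ℚ_[p])) :
    vmulSet p g (c • U) = c • vmulSet p g U := by
  simp only [vmulSet, ← Set.image_smul, Set.image_image, smul_vecMul]

lemma disjoint_vmulSet_iff {g : GL (Fin 2) ℚ_[p]} {U V : Set (Fin 2 → ℚ_[p])} :
    Disjoint (vmulSet p g U) (vmulSet p g V) ↔ Disjoint U V :=
  Set.disjoint_image_iff g.vecMulHomeomorph.injective

lemma closedBall_eq_zpow_smul_ballV {c : Fin 2 → ℚ_[p]} {m : ℤ} (hm : (p : ℝ) ^ (-m) < ‖c‖) :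
    ∃ (j : ℤ) (v : Fin 2 → ℚ_[p]) (n : ℕ), 1 ≤ n ∧ IsPrimitiveVec p v ∧
      closedBall c ((p : ℝ) ^ (-m)) = (p : ℚ_[p]) ^ j • ballV p v n := by
  have hp : (p : ℝ) ≠ 0 := prime_cast_pos.ne'
  have hc : c ≠ 0 := by
    rintro rfl
    rw [norm_zero] at hm
    exact hm.not_ge (zpow_prime_cast_pos _).le
  obtain ⟨j, hj⟩ := Padic.exists_pi_norm_eq_zpow hc
  have hjm : j < m := by
    rw [hj] at hm
    exact neg_lt_neg_iff.1 ((zpow_lt_zpow_iff_right₀ (one_lt_prime_cast (p := p))).1 hm)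
  refine ⟨j, (p : ℚ_[p]) ^ (-j) • c, (m - j).toNat, by omega, ?_, ?_⟩
  · rw [isPrimitiveVec_iff_norm_eq_one, norm_smul, Padic.norm_p_zpow, hj, ← zpow_add₀ hp,
      neg_neg, add_neg_cancel, zpow_zero]
  · rw [ballV_eq_closedBall, _root_.smul_closedBall _ _ (zpow_prime_cast_pos _).le, smul_smul,
      ← zpow_add₀ prime_cast_ne_zero, add_neg_cancel, zpow_zero, one_smul, Padic.norm_p_zpow,
      ← zpow_add₀ hp, Int.toNat_of_nonneg (by omega)]
    congr 2
    ring

lemma IsCompactOpenV.exists_zpow_closedBall_subset {U : Set (Fin 2 → ℚ_[p])}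
    (hU : IsCompactOpenV p U) : ∃ m : ℤ, ∀ w ∈ U, closedBall w ((p : ℝ) ^ (-m)) ⊆ U := by
  obtain ⟨δ, hδ, hsub⟩ := hU.1.exists_cthickening_subset_open hU.2.1 subset_rfl
  obtain ⟨m, hm⟩ := exists_pow_lt_of_lt_one hδ (inv_lt_one_of_one_lt₀ (one_lt_prime_cast (p := p)))
  refine ⟨m, fun w hw => (closedBall_subset_closedBall ?_).trans
    ((closedBall_subset_cthickening hw δ).trans hsub)⟩
  rw [_root_.zpow_neg, zpow_natCast, ← inv_pow]
  exact hm.le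

lemma IsCompactOpenV.exists_finset_zpow_smul_ballV_partition {U : Set (Fin 2 → ℚ_[p])}
    (hU : IsCompactOpenV p U) :
    ∃ F : Finset (Set (Fin 2 → ℚ_[p])), (F : Set (Set (Fin 2 → ℚ_[p]))).PairwiseDisjoint id ∧
      ⋃ B ∈ F, B = U ∧ ∀ B ∈ F, ∃ (j : ℤ) (v : Fin 2 → ℚ_[p]) (n : ℕ), 1 ≤ n ∧
        IsPrimitiveVec p v ∧ B = (p : ℚ_[p]) ^ j • ballV p v n := by
  obtain ⟨m, hm⟩ := hU.exists_zpow_closedBall_subset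
  obtain ⟨F, hdisj, hunion, hballs⟩ := hU.1.exists_finset_closedBall_partition (zpow_prime_cast_pos _) hm
  refine ⟨F, hdisj, hunion, fun B hB => ?_⟩
  obtain ⟨w, hw, rfl⟩ := hballs B hB
  refine closedBall_eq_zpow_smul_ballV (not_le.1 fun h => hU.2.2 (hm w hw ?_) rfl)
  rwa [mem_closedBall, dist_zero_left]

variable {A : Type*}

lemma eq_of_additive_of_eq_on_zpow_smul_ballV [AddCancelCommMonoid A]
    {ν ν' : Set (Fin 2 → ℚ_[p]) → A}
    (hν : ∀ U V, IsCompactOpenV p U → IsCompactOpenV p V → Disjoint U V → ν (U ∪ V) = ν U + ν V)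
    (hν' : ∀ U V, IsCompactOpenV p U → IsCompactOpenV p V → Disjoint U V →
      ν' (U ∪ V) = ν' U + ν' V)
    (hball : ∀ (j : ℤ) (v : Fin 2 → ℚ_[p]) (n : ℕ), 1 ≤ n → IsPrimitiveVec p v →
      ν ((p : ℚ_[p]) ^ j • ballV p v n) = ν' ((p : ℚ_[p]) ^ j • ballV p v n))
    {U : Set (Fin 2 → ℚ_[p])} (hU : IsCompactOpenV p U) : ν U = ν' U := by
  obtain ⟨F, hdisj, rfl, hF⟩ := hU.exists_finset_zpow_smul_ballV_partition
  have hFco : ∀ B ∈ F, IsCompactOpenV p B := fun B hB => by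
    obtain ⟨j, v, n, hn, hv, rfl⟩ := hF B hB
    exact (hv.isCompactOpenV_ballV hn).smul (zpow_ne_zero j prime_cast_ne_zero)
  have hunion : ∀ U V, IsCompactOpenV p U → IsCompactOpenV p V → IsCompactOpenV p (U ∪ V) :=
    fun _ _ => IsCompactOpenV.union
  rw [map_biUnion_of_additive isCompactOpenV_empty hunion hν hFco hdisj,
    map_biUnion_of_additive isCompactOpenV_empty hunion hν' hFco hdisj]
  refine Finset.sum_congr rfl fun B hB => ?_
  obtain ⟨j, v, n, hn, hv, rfl⟩ := hF B hB
  exact hball j v n hn hv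

lemma map_zpow_smul_of_map_pScaleV {μ : Set (Fin 2 → ℚ_[p]) → A}
    (hinv : ∀ U, IsCompactOpenV p U → μ (pScaleV p U) = μ U) (j : ℤ) {U : Set (Fin 2 → ℚ_[p])}
    (hU : IsCompactOpenV p U) : μ ((p : ℚ_[p]) ^ j • U) = μ U := by
  have hpow : ∀ (k : ℕ) (U : Set (Fin 2 → ℚ_[p])), IsCompactOpenV p U →
      μ ((p : ℚ_[p]) ^ k • U) = μ U := by
    intro k
    induction k with
    | zero => simp
    | succ k ih =>
      intro U hU
      rw [pow_succ', mul_smul, ← ih U hU]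
      exact hinv _ (hU.smul (pow_ne_zero k prime_cast_ne_zero))
  obtain ⟨k, rfl | rfl⟩ := Int.eq_nat_or_neg j
  · exact_mod_cast hpow k U hU
  · have hUk := hU.smul (zpow_ne_zero (-(k : ℤ)) prime_cast_ne_zero)
    rw [← hpow k _ hUk, smul_smul, ← zpow_natCast, ← zpow_add₀ prime_cast_ne_zero,
      add_neg_cancel, zpow_zero, one_smul]

lemma map_vmulSet_of_map_vmulSet_ballV [AddCommGroup A] {μ : Set (Fin 2 → ℚ_[p]) → A}
    (hdist : ∀ U V, IsCompactOpenV p U → IsCompactOpenV p V → Disjoint U V →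
      μ (U ∪ V) = μ U + μ V)
    (hinv : ∀ U, IsCompactOpenV p U → μ (pScaleV p U) = μ U) (g : GL (Fin 2) ℚ_[p]) (φ : A →+ A)
    (hball : ∀ (v : Fin 2 → ℚ_[p]) (n : ℕ), 1 ≤ n → IsPrimitiveVec p v →
      μ (vmulSet p g (ballV p v n)) = φ (μ (ballV p v n)))
    {U : Set (Fin 2 → ℚ_[p])} (hU : IsCompactOpenV p U) : μ (vmulSet p g U) = φ (μ U) := by
  refine eq_of_additive_of_eq_on_zpow_smul_ballV (ν := fun U => μ (vmulSet p g U))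
    (ν' := fun U => φ (μ U)) (fun U V hU hV h => ?_) (fun U V hU hV h => ?_)
    (fun j v n hn hv => ?_) hU
  · rw [vmulSet, Set.image_union]
    exact hdist _ _ (hU.vmulSet g) (hV.vmulSet g) (disjoint_vmulSet_iff.2 h)
  · rw [hdist U V hU hV h, map_add]
  · have hB := hv.isCompactOpenV_ballV hn
    rw [vmulSet_smul, map_zpow_smul_of_map_pScaleV hinv j (hB.vmulSet g),
      map_zpow_smul_of_map_pScaleV hinv j hB, hball v n hn hv]

lemma map_vmulSet_of_mem_closure {s : Set (GL (Fin 2) ℚ_[p])} (act : Subgroup.closure s → A → A)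
    (hact_one : ∀ a, act 1 a = a) (hact_mul : ∀ g h a, act (g * h) a = act h (act g a))
    {μ : Set (Fin 2 → ℚ_[p]) → A}
    (hgen : ∀ γ : Subgroup.closure s, (γ : GL (Fin 2) ℚ_[p]) ∈ s → ∀ U, IsCompactOpenV p U →
      μ (vmulSet p γ U) = act γ (μ U))
    (γ : Subgroup.closure s) {U : Set (Fin 2 → ℚ_[p])} (hU : IsCompactOpenV p U) :
    μ (vmulSet p γ U) = act γ (μ U) := by
  have hγ : γ ∈ Subgroup.closure (((↑) : Subgroup.closure s → GL (Fin 2) ℚ_[p]) ⁻¹' s) := by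
    rw [Subgroup.closure_closure_coe_preimage]
    exact Subgroup.mem_top γ
  induction hγ using Subgroup.closure_induction generalizing U with
  | mem γ hγ => exact hgen γ hγ U hU
  | one => rw [OneMemClass.coe_one, vmulSet_one, hact_one]
  | mul x y _ _ hx hy => rw [Subgroup.coe_mul, vmulSet_mul, hy (hU.vmulSet x), hx hU, hact_mul]
  | inv x _ hx =>
    have h := hx (hU.vmulSet (x⁻¹ : Subgroup.closure s))
    rw [← vmulSet_mul, ← Subgroup.coe_mul, inv_mul_cancel, OneMemClass.coe_one,
      vmulSet_one] at h
    rw [h, ← hact_mul, mul_inv_cancel, hact_one]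

end Padic

/-- Let `A` carry a right action of `G` by additive automorphisms, and let `μ` be a
`p`-invariant `A`-valued distribution on `X`. If `μ` is equivariant for `SL₂(ℤ)` on all
compact opens of `X`, and equivariant for `T` on all balls `v + pⁿℤ_p²` with `n ≥ 1` and
`v` primitive, then `μ(U·γ) = μ(U)·γ` for every compact open `U ⊆ X` and every `γ ∈ G`. -/
theorem stmt8 (p : ℕ) [Fact p.Prime] {A : Type*} [AddCommGroup A]
    (act : Ggrp p → A → A)
    (hact_one : ∀ a, act 1 a = a)
    (hact_mul : ∀ g h a, act (g * h) a = act h (act g a))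
    (hact_add : ∀ g a b, act g (a + b) = act g a + act g b)
    (μ : Set (Fin 2 → ℚ_[p]) → A)
    (hdist : ∀ U V, IsCompactOpenV p U → IsCompactOpenV p V → Disjoint U V →
      μ (U ∪ V) = μ U + μ V)
    (hinv : ∀ U, IsCompactOpenV p U → μ (pScaleV p U) = μ U)
    (hSL : ∀ U, IsCompactOpenV p U → ∀ γ : Ggrp p, (γ : GL (Fin 2) ℚ_[p]) ∈ SLZset p →
      μ (vmulSet p (γ : GL (Fin 2) ℚ_[p]) U) = act γ (μ U))
    (hT : ∀ γ : Ggrp p, (γ : GL (Fin 2) ℚ_[p]) = Tmat p →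
      ∀ (v : Fin 2 → ℚ_[p]) (n : ℕ), 1 ≤ n → IsPrimitiveVec p v →
        μ (vmulSet p (γ : GL (Fin 2) ℚ_[p]) (ballV p v n)) = act γ (μ (ballV p v n))) :
    ∀ U, IsCompactOpenV p U → ∀ γ : Ggrp p,
      μ (vmulSet p (γ : GL (Fin 2) ℚ_[p]) U) = act γ (μ U) := by
  intro U hU γ
  refine map_vmulSet_of_mem_closure act hact_one hact_mul (fun γ hγ V hV => ?_) γ hU
  rcases hγ with hγ | hγ
  · exact hSL V hV γ hγ
  · exact map_vmulSet_of_map_vmulSet_ballV hdist hinv γ (AddMonoidHom.mk' (act γ) (hact_add γ))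
      (hT γ hγ) hV
end

section
/- Let K be a totally real number field of degree 2 over ℚ with ring of integers 𝓞, let σ be the nontrivial element of Gal(K/ℚ), let 𝔡 be the different ideal of 𝓞 over ℤ, and assume 𝔡 = δ𝓞 for some δ ∈ 𝓞. Let p be a rational prime such that p𝓞 is a prime ideal. Let ψ be a function from the nonzero ideals of 𝓞 to ℂ such that ψ(IJ) = ψ(I)ψ(J) for all nonzero ideals I, J, ψ(I)·ψ(σ(I)) = 1 for every nonzero ideal I, ψ(x𝓞) = 1 for every totally positive x ∈ 𝓞, and ψ(𝔡) = −1. Then for every ν ∈ K, ν ≠ 0, with ν totally positive and νδ ∈ 𝓞, one has Σ ψ(I) = − Σ ψ(J), where the first sum runs over the nonzero ideals I dividing the ideal (νδ)𝓞 with p𝓞 ∤ I, and the second sum runs over the nonzero ideals J dividing the ideal (σ(ν)δ)𝓞 with p𝓞 ∤ J. -/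
open NumberField

/-!
Write `(νδ) = 𝔭 ^ a * A` with `𝔭 = p𝓞` not dividing `A`. Since `ψ` is trivial on principal
ideals with totally positive generators, `ψ 𝔭 = 1`, and `ψ (νδ) = ψ 𝔡 = -1` (multiply `ν` by
the square of a denominator), so `ψ A = -1`. As `σ` fixes `𝔡` and `𝔭`, the ideal `(σ(ν)δ)` is
`σ (νδ) = 𝔭 ^ a * σ A`, so the two sums run over the divisors of `A` and of `σ A`. The bijection
`I ↦ σ (A / I)` between them turns `ψ` into `-ψ`: `ψ (σ (A / I)) = ψ (A / I)⁻¹ = -ψ I`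
because `ψ I * ψ (A / I) = ψ A = -1`.
-/

theorem setOf_dvd_pow_mul_and_not_dvd {M : Type*} [CommMonoid M] [DecompositionMonoid M]
    {p b : M} (hp : Irreducible p) (hb : ¬p ∣ b) (k : ℕ) :
    {c | c ∣ p ^ k * b ∧ ¬p ∣ c} = {c | c ∣ b} := by
  ext c
  refine ⟨fun ⟨hc, hpc⟩ => ?_, fun hc => ⟨hc.mul_left _, fun hpc => hb (hpc.trans hc)⟩⟩
  exact (hp.isRelPrime_iff_not_dvd.mpr hpc).symm.pow_right.dvd_of_dvd_mul_left hc

section DivisorSums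

variable {M : Type*} [CommMonoidWithZero M] [IsCancelMulZero M]

theorem finsum_mem_dvd_eq_of_mul_eq {β : Type*} [AddCommMonoid β] {a : M} (ha : a ≠ 0)
    {f g : M → β} (h : ∀ b c, b * c = a → f b = g c) :
    ∑ᶠ b ∈ {b | b ∣ a}, f b = ∑ᶠ c ∈ {c | c ∣ a}, g c := by
  classical
  let e : M → M := fun b => if hb : b ∣ a then hb.choose else b
  have he : ∀ b, b ∣ a → b * e b = a := fun b hb => by
    simp only [e, dif_pos hb]
    exact hb.choose_spec.symm
  refine finsum_mem_eq_of_bijOn e ⟨fun b hb => Dvd.intro_left b (he b hb), ?_, ?_⟩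
    fun b hb => h b (e b) (he b hb)
  · intro b hb b' hb' hbb'
    refine mul_right_cancel₀ (right_ne_zero_of_mul (he b hb ▸ ha : b * e b ≠ 0)) ?_
    rw [he b hb, hbb', he b' hb']
  · rintro c ⟨d, hd⟩
    have hda : d ∣ a := Dvd.intro_left c hd.symm
    refine ⟨d, hda, mul_left_cancel₀ (right_ne_zero_of_mul (hd ▸ ha)) ?_⟩
    rw [he d hda, hd, mul_comm]

variable {R : Type*} [CommRing R] (τ : M ≃* M) {ψ : M → R}
  (hmul : ∀ a b, a ≠ 0 → b ≠ 0 → ψ (a * b) = ψ a * ψ b) (hτ : ∀ a, a ≠ 0 → ψ a * ψ (τ a) = 1)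
include hmul hτ

theorem finsum_mem_dvd_map_eq_neg {a : M} (ha : a ≠ 0) (hψa : ψ a = -1) :
    ∑ᶠ c ∈ {c | c ∣ τ a}, ψ c = -∑ᶠ b ∈ {b | b ∣ a}, ψ b := by
  have hτdvd : Set.BijOn τ {b | b ∣ a} {c | c ∣ τ a} :=
    ⟨fun b hb => map_dvd τ hb, τ.injective.injOn, fun c hc =>
      ⟨τ.symm c, (map_dvd_iff τ).mp (by rwa [MulEquiv.apply_symm_apply]), τ.apply_symm_apply c⟩⟩
  rw [← finsum_mem_eq_of_bijOn τ hτdvd fun _ _ => rfl,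
    finsum_mem_dvd_eq_of_mul_eq ha (g := fun c => -ψ c)]
  · simp only [finsum_neg_distrib]
  · intro b c hbc
    have hb : b ≠ 0 := left_ne_zero_of_mul (hbc ▸ ha)
    have hc : c ≠ 0 := right_ne_zero_of_mul (hbc ▸ ha)
    have hψbc : ψ b * ψ c = -1 := by rw [← hmul b c hb hc, hbc, hψa]
    linear_combination (-ψ c) * hτ b hb + ψ (τ b) * hψbc

theorem finsum_mem_dvd_not_dvd_map_eq_neg [DecompositionMonoid M] [WfDvdMonoid M] {p : M}
    (hp : Irreducible p) (hτp : τ p = p) (hψp : ψ p = 1) {a : M} (ha : a ≠ 0) (hψa : ψ a = -1) :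
    ∑ᶠ c ∈ {c | c ∣ τ a ∧ ¬p ∣ c}, ψ c = -∑ᶠ b ∈ {b | b ∣ a ∧ ¬p ∣ b}, ψ b := by
  obtain ⟨k, b, hpb, rfl⟩ := WfDvdMonoid.max_power_factor ha hp
  have hb : b ≠ 0 := right_ne_zero_of_mul ha
  have hψb : ψ b = ψ (p ^ k * b) := by
    clear ha hψa
    induction k with
    | zero => rw [pow_zero, one_mul]
    | succ n ih =>
      rw [ih, pow_succ', mul_assoc, hmul _ _ hp.ne_zero (mul_ne_zero (pow_ne_zero n hp.ne_zero) hb),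
        hψp, one_mul]
  have hτb : ¬p ∣ τ b := by rwa [← hτp, map_dvd_iff]
  rw [map_mul, map_pow, hτp, setOf_dvd_pow_mul_and_not_dvd hp hpb,
    setOf_dvd_pow_mul_and_not_dvd hp hτb]
  exact finsum_mem_dvd_map_eq_neg τ hmul hτ hb (hψb.trans hψa)

end DivisorSums

def Ideal.mapMulEquiv {R S : Type*} [CommSemiring R] [CommSemiring S] (e : R ≃+* S) :
    Ideal R ≃* Ideal S where
  toFun := Ideal.map e
  invFun := Ideal.map e.symm
  left_inv _ := Ideal.map_of_equiv e
  right_inv _ := Ideal.map_of_equiv e.symm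
  map_mul' := Ideal.map_mul e

theorem Ideal.map_span_singleton_natCast {R S F : Type*} [Semiring R] [Semiring S] [FunLike F R S]
    [RingHomClass F R S] (f : F) (n : ℕ) :
    (Ideal.span {(n : R)}).map f = Ideal.span {(n : S)} := by
  rw [Ideal.map_span, Set.image_singleton, map_natCast]

namespace NumberField

open scoped nonZeroDivisors

variable {K : Type*} [Field K]

def divisorsPrimeTo (x : K) (Q : Ideal (𝓞 K)) : Set (Ideal (𝓞 K)) :=
  {I | I ≠ ⊥ ∧ (∃ m : 𝓞 K, (m : K) = x ∧ I ∣ Ideal.span {m}) ∧ ¬Q ∣ I}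

theorem divisorsPrimeTo_eq {x : K} {m : 𝓞 K} (hm : (m : K) = x) (hm0 : m ≠ 0)
    (Q : Ideal (𝓞 K)) : divisorsPrimeTo x Q = {I | I ∣ Ideal.span {m} ∧ ¬Q ∣ I} := by
  ext I
  constructor
  · rintro ⟨-, ⟨m', hm', hI⟩, hQI⟩
    obtain rfl : m' = m := RingOfIntegers.ext (hm'.trans hm.symm)
    exact ⟨hI, hQI⟩
  · rintro ⟨hI, hQI⟩
    refine ⟨?_, ⟨m, hm, hI⟩, hQI⟩
    rintro rfl
    exact hm0 (Ideal.span_singleton_eq_bot.mp (zero_dvd_iff.mp hI))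

theorem divisorsPrimeTo_eq_empty {x : K} (hx : ¬∃ m : 𝓞 K, (m : K) = x) (Q : Ideal (𝓞 K)) :
    divisorsPrimeTo x Q = ∅ :=
  Set.eq_empty_of_forall_notMem fun _ ⟨_, ⟨m, hm, _⟩, _⟩ => hx ⟨m, hm⟩

variable [NumberField K]

theorem ne_zero_of_differentIdeal_eq_span {δ : 𝓞 K}
    (hδ : differentIdeal ℤ (𝓞 K) = Ideal.span {δ}) : δ ≠ 0 := by
  rintro rfl
  exact differentIdeal_ne_bot (by rw [hδ, Ideal.span_singleton_eq_bot])

theorem map_mem_dual_one (σ : K ≃ₐ[ℚ] K) {x : K}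
    (hx : x ∈ FractionalIdeal.dual ℤ ℚ (1 : FractionalIdeal (𝓞 K)⁰ K)) :
    σ x ∈ FractionalIdeal.dual ℤ ℚ (1 : FractionalIdeal (𝓞 K)⁰ K) := by
  rw [FractionalIdeal.mem_dual (one_ne_zero' (FractionalIdeal (𝓞 K)⁰ K))] at hx ⊢
  intro a ha
  obtain ⟨b, rfl⟩ := (FractionalIdeal.mem_one_iff _).mp ha
  have hb := hx _ ((FractionalIdeal.mem_one_iff _).mpr
    ⟨RingOfIntegers.mapRingEquiv (σ.symm : K ≃+* K) b, rfl⟩)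
  rw [Algebra.traceForm_apply] at hb ⊢
  rw [← Algebra.trace_eq_of_algEquiv σ, map_mul] at hb
  convert hb using 4
  exact (σ.apply_symm_apply _).symm

theorem dual_one_eq_spanSingleton_inv {δ : 𝓞 K} (hδ : differentIdeal ℤ (𝓞 K) = Ideal.span {δ}) :
    FractionalIdeal.dual ℤ ℚ (1 : FractionalIdeal (𝓞 K)⁰ K) =
      FractionalIdeal.spanSingleton (𝓞 K)⁰ (δ : K)⁻¹ := by
  have h := coeIdeal_differentIdeal ℤ ℚ K (𝓞 K)
  rw [hδ, FractionalIdeal.coeIdeal_span_singleton] at h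
  rw [← inv_inv (FractionalIdeal.dual ℤ ℚ 1), ← h, FractionalIdeal.spanSingleton_inv]

theorem mapRingEquiv_dvd_of_differentIdeal_eq_span (σ : K ≃ₐ[ℚ] K) {δ : 𝓞 K}
    (hδ : differentIdeal ℤ (𝓞 K) = Ideal.span {δ}) :
    RingOfIntegers.mapRingEquiv (σ : K ≃+* K) δ ∣ δ := by
  have hδ0 : (δ : K) ≠ 0 :=
    RingOfIntegers.coe_ne_zero_iff.mpr (ne_zero_of_differentIdeal_eq_span hδ)
  have hmem := map_mem_dual_one σ (x := (δ : K)⁻¹)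
    (by rw [dual_one_eq_spanSingleton_inv hδ]; exact FractionalIdeal.mem_spanSingleton_self _ _)
  rw [dual_one_eq_spanSingleton_inv hδ, FractionalIdeal.mem_spanSingleton] at hmem
  obtain ⟨c, hc⟩ := hmem
  refine ⟨c, RingOfIntegers.coe_injective ?_⟩
  rw [Algebra.smul_def, map_inv₀] at hc
  have hσδ0 : σ (δ : K) ≠ 0 := by simpa using hδ0
  field_simp at hc
  simpa [mul_comm] using hc.symm

theorem associated_mapRingEquiv_of_differentIdeal_eq_span (σ : K ≃ₐ[ℚ] K) {δ : 𝓞 K}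
    (hδ : differentIdeal ℤ (𝓞 K) = Ideal.span {δ}) :
    Associated δ (RingOfIntegers.mapRingEquiv (σ : K ≃+* K) δ) := by
  refine associated_of_dvd_dvd ?_ (mapRingEquiv_dvd_of_differentIdeal_eq_span σ hδ)
  have h := map_dvd (RingOfIntegers.mapRingEquiv (σ : K ≃+* K))
    (mapRingEquiv_dvd_of_differentIdeal_eq_span σ.symm hδ)
  convert h
  ext
  simp

theorem exists_coe_eq_mul_and_span_eq_map (σ : K ≃ₐ[ℚ] K) {δ : 𝓞 K}
    (hδ : differentIdeal ℤ (𝓞 K) = Ideal.span {δ}) {x : K} {m : 𝓞 K} (hm : (m : K) = x * δ) :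
    ∃ m' : 𝓞 K, (m' : K) = σ x * δ ∧ Ideal.span {m'} =
      Ideal.mapMulEquiv (RingOfIntegers.mapRingEquiv (σ : K ≃+* K)) (Ideal.span {m}) := by
  obtain ⟨u, hu⟩ := associated_mapRingEquiv_of_differentIdeal_eq_span σ hδ
  set σm := RingOfIntegers.mapRingEquiv (σ : K ≃+* K) m
  refine ⟨σm * ↑u⁻¹, ?_, ?_⟩
  · have hσδ := congrArg ((↑) : 𝓞 K → K) hu
    have hinv : ((u : 𝓞 K) : K) * ((↑u⁻¹ : 𝓞 K) : K) = 1 := by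
      exact_mod_cast congrArg ((↑) : 𝓞 K → K) u.mul_inv
    push_cast [σm, RingOfIntegers.mapRingEquiv_apply] at hσδ ⊢
    rw [hm, map_mul, ← hσδ, mul_assoc, mul_assoc, hinv, mul_one]
    rfl
  · rw [Ideal.span_singleton_eq_span_singleton.mpr (⟨u, by simp⟩ : Associated (σm * ↑u⁻¹) σm)]
    change _ = Ideal.map _ _
    rw [Ideal.map_span, Set.image_singleton]

theorem exists_coe_eq_map_mul_iff (σ : K ≃ₐ[ℚ] K) {δ : 𝓞 K}
    (hδ : differentIdeal ℤ (𝓞 K) = Ideal.span {δ}) {x : K} :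
    (∃ m : 𝓞 K, (m : K) = σ x * δ) ↔ ∃ m : 𝓞 K, (m : K) = x * δ :=
  ⟨fun ⟨_, hm⟩ => by
      simpa using (exists_coe_eq_mul_and_span_eq_map σ.symm hδ hm).imp fun _ => And.left,
    fun ⟨_, hm⟩ => (exists_coe_eq_mul_and_span_eq_map σ hδ hm).imp fun _ => And.left⟩

theorem apply_span_eq_of_coe_eq_mul (ψ : Ideal (𝓞 K) → ℂ)
    (hψmul : ∀ I J : Ideal (𝓞 K), I ≠ ⊥ → J ≠ ⊥ → ψ (I * J) = ψ I * ψ J)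
    (hψprin : ∀ x : 𝓞 K, (∀ φ : K →+* ℝ, 0 < φ (x : K)) → ψ (Ideal.span {x}) = 1)
    {ν : K} (hνpos : ∀ φ : K →+* ℝ, 0 < φ ν) {d m : 𝓞 K} (hm0 : m ≠ 0) (hm : (m : K) = ν * d) :
    ψ (Ideal.span {m}) = ψ (Ideal.span {d}) := by
  obtain ⟨c, b, hb, hν⟩ := IsFractionRing.div_surjective (A := 𝓞 K) ν
  have hb0 : b ≠ 0 := nonZeroDivisors.ne_zero hb
  have hbK : (b : K) ≠ 0 := RingOfIntegers.coe_ne_zero_iff.mpr hb0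
  have hcK : (c : K) = ν * b := by rw [← hν]; field_simp
  have hbc : ((b * c : 𝓞 K) : K) = (b ^ 2 : 𝓞 K) * ν := by
    push_cast; linear_combination (b : K) * hcK
  have hkey : b ^ 2 * m = b * c * d := RingOfIntegers.ext <| by
    push_cast; linear_combination (b : K) ^ 2 * hm - (b * d : K) * hcK
  have hbpos (φ : K →+* ℝ) : 0 < φ ((b ^ 2 : 𝓞 K) : K) := by
    simpa using pow_two_pos_of_ne_zero ((map_ne_zero φ).mpr hbK)
  have hbcpos (φ : K →+* ℝ) : 0 < φ ((b * c : 𝓞 K) : K) := by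
    rw [hbc, map_mul]; exact mul_pos (hbpos φ) (hνpos φ)
  have hbcd : b * c * d ≠ 0 := hkey ▸ mul_ne_zero (pow_ne_zero 2 hb0) hm0
  have h := congrArg (fun x => ψ (Ideal.span {x})) hkey
  rw [← Ideal.span_singleton_mul_span_singleton, ← Ideal.span_singleton_mul_span_singleton] at h
  rwa [hψmul, hψmul, hψprin _ hbpos, hψprin _ hbcpos, one_mul, one_mul] at h
  all_goals rw [Ne, Ideal.span_singleton_eq_bot]
  exacts [left_ne_zero_of_mul hbcd, right_ne_zero_of_mul hbcd, pow_ne_zero 2 hb0, hm0]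

end NumberField

theorem stmt10_general (K : Type*) [Field K] [NumberField K]
    (σ : K ≃ₐ[ℚ] K)
    (δ : 𝓞 K) (hδ : differentIdeal ℤ (𝓞 K) = Ideal.span {δ})
    (p : ℕ) (hp : p.Prime) (hpinert : (Ideal.span {(p : 𝓞 K)}).IsPrime)
    (ψ : Ideal (𝓞 K) → ℂ)
    (hψmul : ∀ I J : Ideal (𝓞 K), I ≠ ⊥ → J ≠ ⊥ → ψ (I * J) = ψ I * ψ J)
    (hψconj : ∀ I : Ideal (𝓞 K), I ≠ ⊥ →
      ψ I * ψ (Ideal.map (RingOfIntegers.mapRingHom σ) I) = 1)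
    (hψprin : ∀ x : 𝓞 K, (∀ φ : K →+* ℝ, 0 < φ (x : K)) → ψ (Ideal.span {x}) = 1)
    (hψdiff : ψ (differentIdeal ℤ (𝓞 K)) = -1)
    (ν : K) (hν0 : ν ≠ 0) (hνpos : ∀ φ : K →+* ℝ, 0 < φ ν) :
    (∑ᶠ I ∈ {I : Ideal (𝓞 K) | I ≠ ⊥ ∧
        (∃ m : 𝓞 K, (m : K) = ν * (δ : K) ∧ I ∣ Ideal.span {m}) ∧
        ¬(Ideal.span {(p : 𝓞 K)} ∣ I)}, ψ I)
      = -(∑ᶠ J ∈ {J : Ideal (𝓞 K) | J ≠ ⊥ ∧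
        (∃ m : 𝓞 K, (m : K) = σ ν * (δ : K) ∧ J ∣ Ideal.span {m}) ∧
        ¬(Ideal.span {(p : 𝓞 K)} ∣ J)}, ψ J) := by
  set P := Ideal.span {(p : 𝓞 K)}
  set τ := Ideal.mapMulEquiv (RingOfIntegers.mapRingEquiv (σ : K ≃+* K))
  change ∑ᶠ I ∈ divisorsPrimeTo (ν * δ) P, ψ I = -∑ᶠ J ∈ divisorsPrimeTo (σ ν * δ) P, ψ J
  by_cases hint : ∃ m : 𝓞 K, (m : K) = ν * δ
  swap
  · have hint' : ¬∃ m : 𝓞 K, (m : K) = σ ν * δ := by rwa [exists_coe_eq_map_mul_iff σ hδ]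
    rw [divisorsPrimeTo_eq_empty hint, divisorsPrimeTo_eq_empty hint', finsum_mem_empty, neg_zero]
  obtain ⟨m, hm⟩ := hint
  obtain ⟨m', hm', hspan⟩ := exists_coe_eq_mul_and_span_eq_map σ hδ hm
  have hδK : (δ : K) ≠ 0 :=
    RingOfIntegers.coe_ne_zero_iff.mpr (ne_zero_of_differentIdeal_eq_span hδ)
  have hm0 : m ≠ 0 := RingOfIntegers.coe_ne_zero_iff.mp (hm ▸ mul_ne_zero hν0 hδK : (m : K) ≠ 0)
  have hm'0 : m' ≠ 0 := RingOfIntegers.coe_ne_zero_iff.mp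
    (hm' ▸ mul_ne_zero (by simpa using hν0) hδK : (m' : K) ≠ 0)
  have hA0 : Ideal.span {m} ≠ 0 := mt Ideal.span_singleton_eq_bot.mp hm0
  have hP : Prime P := (Ideal.prime_iff_isPrime (by simpa [P] using hp.ne_zero)).mpr hpinert
  have hψP : ψ P = 1 := hψprin _ fun φ => by simpa using hp.pos
  have hψA : ψ (Ideal.span {m}) = -1 := by
    rw [apply_span_eq_of_coe_eq_mul ψ hψmul hψprin hνpos hm0 hm, ← hδ, hψdiff]
  rw [divisorsPrimeTo_eq hm hm0, divisorsPrimeTo_eq hm' hm'0, hspan,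
    finsum_mem_dvd_not_dvd_map_eq_neg τ hψmul hψconj hP.irreducible
      (Ideal.map_span_singleton_natCast _ p) hψP hA0 hψA, neg_neg]

/-- Let `K` be a totally real quadratic field, `σ` the nontrivial automorphism, `𝔡 = δ𝓞`
the different ideal, and `p` a rational prime inert in `K`. Let `ψ` be a multiplicative,
totally odd, unramified character of the narrow class group, viewed as a function on
ideals (so `ψ(I)ψ(σI) = 1`, `ψ((x)) = 1` for `x` totally positive, and `ψ(𝔡) = −1`).
Then for every totally positive `ν ≠ 0` with `νδ ∈ 𝓞`,
`Σ_{I ∣ (νδ), p∤I} ψ(I) = − Σ_{J ∣ (σ(ν)δ), p∤J} ψ(J)`. -/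
theorem stmt10 (K : Type*) [Field K] [NumberField K]
    (hdeg : Module.finrank ℚ K = 2)
    (htotallyreal : ∀ φ : K →+* ℂ, ∀ x : K, (φ x).im = 0)
    (σ : K ≃ₐ[ℚ] K) (hσ : σ ≠ AlgEquiv.refl)
    (δ : 𝓞 K) (hδ : differentIdeal ℤ (𝓞 K) = Ideal.span {δ})
    (p : ℕ) (hp : p.Prime) (hpinert : (Ideal.span {(p : 𝓞 K)}).IsPrime)
    (ψ : Ideal (𝓞 K) → ℂ)
    (hψmul : ∀ I J : Ideal (𝓞 K), I ≠ ⊥ → J ≠ ⊥ → ψ (I * J) = ψ I * ψ J)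
    (hψconj : ∀ I : Ideal (𝓞 K), I ≠ ⊥ →
      ψ I * ψ (Ideal.map (RingOfIntegers.mapRingHom σ) I) = 1)
    (hψprin : ∀ x : 𝓞 K, (∀ φ : K →+* ℝ, 0 < φ (x : K)) → ψ (Ideal.span {x}) = 1)
    (hψdiff : ψ (differentIdeal ℤ (𝓞 K)) = -1)
    (ν : K) (hν0 : ν ≠ 0) (hνpos : ∀ φ : K →+* ℝ, 0 < φ ν) :
    (∑ᶠ I ∈ {I : Ideal (𝓞 K) | I ≠ ⊥ ∧
        (∃ m : 𝓞 K, (m : K) = ν * (δ : K) ∧ I ∣ Ideal.span {m}) ∧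
        ¬(Ideal.span {(p : 𝓞 K)} ∣ I)}, ψ I)
      = -(∑ᶠ J ∈ {J : Ideal (𝓞 K) | J ≠ ⊥ ∧
        (∃ m : 𝓞 K, (m : K) = σ ν * (δ : K) ∧ J ∣ Ideal.span {m}) ∧
        ¬(Ideal.span {(p : 𝓞 K)} ∣ J)}, ψ J) :=
  stmt10_general K σ δ hδ p hp hpinert ψ hψmul hψconj hψprin hψdiff ν hν0 hνpos
end

section
/- Let E be a commutative ring and work in the ring of dual numbers E[ε] (so ε² = 0). Fix elements ψ, L, λ, μ ∈ E. Define a sequence a : ℕ → E[ε] by a(0) = 1, a(1) = 1 + ψ + ε·L·(λψ + μ), and the Hecke recursion a(n+1) = a(1)·a(n) − ψ·(1 + ε·L·(λ + μ))·a(n−1) for n ≥ 1. Then for every n ≥ 0, a(n) = Σ_{j=0}^{n} ψ^j · (1 + ε·L·(j·λ + (n−j)·μ)). -/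
open TrivSqZeroExt

private def Ssum {E : Type*} [CommRing E] (ψ : E) (n : ℕ) : E :=
  ∑ j ∈ Finset.range (n + 1), ψ ^ j

private def Tsum {E : Type*} [CommRing E] (ψ L lam mu : E) (n : ℕ) : E :=
  ∑ j ∈ Finset.range (n + 1), ψ ^ j * (L * ((j : E) * lam + ((n - j : ℕ) : E) * mu))

private lemma Ssucc {E : Type*} [CommRing E] (ψ : E) (n : ℕ) :
    Ssum ψ (n + 1) = Ssum ψ n + ψ ^ (n + 1) := by
  simp [Ssum, Finset.sum_range_succ]

private lemma Tsucc {E : Type*} [CommRing E] (ψ L lam mu : E) (n : ℕ) :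
    Tsum ψ L lam mu (n + 1) = Tsum ψ L lam mu n + L * mu * Ssum ψ n
      + ψ ^ (n + 1) * (L * (((n : E) + 1) * lam)) := by
  unfold Tsum Ssum
  rw [Finset.sum_range_succ]
  have h : ∀ j ∈ Finset.range (n + 1),
      ψ ^ j * (L * ((j : E) * lam + ((n + 1 - j : ℕ) : E) * mu))
        = ψ ^ j * (L * ((j : E) * lam + ((n - j : ℕ) : E) * mu)) + ψ ^ j * (L * mu) := by
    intro j hj
    have hj' : j ≤ n := Nat.lt_succ_iff.mp (Finset.mem_range.mp hj)
    have hc : ((n + 1 - j : ℕ) : E) = ((n - j : ℕ) : E) + 1 := by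
      rw [Nat.succ_sub hj']
      push_cast
      ring
    rw [hc]; ring
  rw [Finset.sum_congr rfl h, Finset.sum_add_distrib, ← Finset.sum_mul]
  simp only [Nat.sub_self, Nat.cast_zero, Nat.cast_add, Nat.cast_one]
  ring

private lemma bigsum_eq {E : Type*} [CommRing E] (ψ L lam mu : E) (n : ℕ) :
    (∑ j ∈ Finset.range (n + 1),
      inl (ψ ^ j) *
        (1 + DualNumber.eps * inl (L * ((j : E) * lam + ((n - j : ℕ) : E) * mu)))
        : DualNumber E)
      = inl (Ssum ψ n) + DualNumber.eps * inl (Tsum ψ L lam mu n) := by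
  ext <;> simp [Ssum, Tsum, snd_mul, fst_sum, snd_sum, mul_comm]

/-- In the dual numbers `E[ε]`, the sequence defined by `a(0) = 1`,
`a(1) = 1 + ψ + ε·L·(λψ + μ)` and the Hecke recursion
`a(n+1) = a(1)·a(n) − ψ·(1 + ε·L·(λ + μ))·a(n−1)` for `n ≥ 1` has closed form
`a(n) = Σ_{j=0}^{n} ψ^j·(1 + ε·L·(jλ + (n−j)μ))`. -/
theorem stmt12 {E : Type*} [CommRing E] (ψ L lam mu : E)
    (a : ℕ → DualNumber E)
    (ha0 : a 0 = 1)
    (ha1 : a 1 = 1 + inl ψ + DualNumber.eps * inl (L * (lam * ψ + mu)))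
    (hrec : ∀ n : ℕ, 1 ≤ n →
      a (n + 1) = a 1 * a n -
        inl ψ * (1 + DualNumber.eps * inl (L * (lam + mu))) * a (n - 1)) :
    ∀ n : ℕ, a n = ∑ j ∈ Finset.range (n + 1),
      inl (ψ ^ j) *
        (1 + DualNumber.eps * inl (L * ((j : E) * lam + ((n - j : ℕ) : E) * mu))) := by
  intro n
  induction n using Nat.twoStepInduction with
  | zero =>
    rw [ha0]
    ext <;> simp [Ssum]
  | one =>
    rw [ha1, bigsum_eq]
    ext <;> simp [Ssum, Tsum, Finset.sum_range_succ, snd_mul, mul_comm] <;> ring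
  | more n IH IH1 =>
    have h := hrec (n + 1) (by omega)
    simp only [Nat.add_sub_cancel] at h
    rw [show n + 2 = n + 1 + 1 from rfl, h, ha1, IH, IH1, bigsum_eq, bigsum_eq, bigsum_eq,
      Tsucc ψ L lam mu (n + 1), Tsucc ψ L lam mu n, Ssucc ψ (n + 1), Ssucc ψ n]
    ext <;> simp [snd_mul, mul_comm] <;> push_cast <;> ring
end

section
/- Let E be a field, let d ≥ 1, and let ℒ, ℒ' : Fin d → E be two families of scalars. Consider the E-linear endomorphism P of E × E × (Fin d → E) × (Fin d → E) defined by P(x_A, x_D, x_B, x_C) = ( Σ_{j} (ℒ(j)·x_C(j) − ℒ'(j)·x_B(j)), (x_A − x_D + x_B(j) − x_C(j))_{j}, x_A + x_D, (x_D − x_B(j))_{j} ). Then P is a linear isomorphism if and only if Σ_{j} (ℒ(j) + ℒ'(j)) ≠ 0. -/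
/-- Let `E` be a field, `d ≥ 1`, and `ℒ, ℒ' : Fin d → E`. The `E`-linear map
`P(x_A, x_D, x_B, x_C) = (Σ_j (ℒ(j)x_C(j) − ℒ'(j)x_B(j)), (x_A − x_D + x_B(j) − x_C(j))_j,
x_A + x_D, (x_D − x_B(j))_j)` on the `(2d+2)`-dimensional space is a linear isomorphism
iff `Σ_j (ℒ(j) + ℒ'(j)) ≠ 0`. -/
theorem stmt14 {E : Type*} [Field E] (d : ℕ) (hd : 1 ≤ d) (L L' : Fin d → E)
    (P : (E × E × (Fin d → E) × (Fin d → E)) →ₗ[E] (E × (Fin d → E) × E × (Fin d → E)))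
    (hP : ∀ (xA xD : E) (xB xC : Fin d → E),
      P (xA, xD, xB, xC) =
        (∑ j, (L j * xC j - L' j * xB j),
         fun j => xA - xD + xB j - xC j,
         xA + xD,
         fun j => xD - xB j)) :
    Function.Bijective P ↔ (∑ j, (L j + L' j)) ≠ 0 := by
  have hdim : Module.finrank E (E × E × (Fin d → E) × (Fin d → E)) =
      Module.finrank E (E × (Fin d → E) × E × (Fin d → E)) := by
    simp [Module.finrank_prod]; ring
  constructor
  · rintro ⟨hinj, -⟩ hS
    have h0 : P (1, -1, fun _ => -1, fun _ => 1) = 0 := by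
      rw [hP]
      have : (∑ j, (L j * 1 - L' j * (-1 : E))) = ∑ j, (L j + L' j) := by
        apply Finset.sum_congr rfl; intro j _; ring
      ext <;> simp_all
    have := hinj (a₁ := (1, -1, fun _ => -1, fun _ => 1)) (a₂ := 0) (by simp [h0])
    exact one_ne_zero (congrArg Prod.fst this)
  · intro hS
    have hinj : Function.Injective P := by
      rw [injective_iff_map_eq_zero]
      rintro ⟨xA, xD, xB, xC⟩ hx
      rw [hP] at hx
      simp only [Prod.ext_iff, Prod.fst_zero, Prod.snd_zero] at hx
      obtain ⟨h1, h2, h3, h4⟩ := hx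
      have hB : ∀ j, xB j = xD := fun j => by
        have := congrFun h4 j; simp at this; linear_combination -this
      have hD : xD = -xA := by linear_combination h3
      have hC : ∀ j, xC j = xA := fun j => by
        have := congrFun h2 j; simp at this
        linear_combination -this + hB j
      have : xA * (∑ j, (L j + L' j)) = 0 := by
        rw [← h1, Finset.mul_sum]
        apply Finset.sum_congr rfl; intro j _
        rw [hB j, hC j, hD]; ring
      have hA : xA = 0 := by
        rcases mul_eq_zero.mp this with h | h
        · exact h
        · exact absurd h hS
      have hD0 : xD = 0 := by rw [hD, hA, neg_zero]
      refine Prod.ext hA (Prod.ext hD0 (Prod.ext ?_ ?_)) <;> funext j <;>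
        simp [hB j, hC j, hA, hD0]
    exact ⟨hinj, (LinearMap.injective_iff_surjective_of_finrank_eq_finrank hdim).mp hinj⟩
end
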